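/- arXiv:2306.00361 — 5 statements merged into one kernel-verified Lean document; each statement's English description precedes it below -/
import Mathlib

section
/- Let B, n be positive integers with B ≤ n. Suppose (n̂_1,…,n̂_B) is a tuple of positive integers with ∑_{b=1}^B n̂_b = n that minimizes ∑_{b=1}^B (n_b − n/B)^2 among all tuples of positive integers (n_1,…,n_B) with ∑_{b=1}^B n_b = n. Then (n̂_1,…,n̂_B) also maximizes ∏_{b=1}^B n_b (equivalently, ∑_{b=1}^B log n_b) among all such tuples. -/
open Finset

private lemma sum_split {M : Type*} [AddCommMonoid M] {B : ℕ} (f : Fin B → M) (i j : Fin B)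
    (hij : i ≠ j) :
    ∑ b, f b = f i + f j + ∑ b ∈ (univ.erase i).erase j, f b := by
  rw [← Finset.add_sum_erase _ f (mem_univ i),
      ← Finset.add_sum_erase _ f (show j ∈ univ.erase i by simp [hij.symm]),
      ← add_assoc]

private lemma prod_split {M : Type*} [CommMonoid M] {B : ℕ} (f : Fin B → M) (i j : Fin B)
    (hij : i ≠ j) :
    ∏ b, f b = f i * f j * ∏ b ∈ (univ.erase i).erase j, f b := by
  rw [← Finset.mul_prod_erase _ f (mem_univ i),
      ← Finset.mul_prod_erase _ f (show j ∈ univ.erase i by simp [hij.symm]),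
      ← mul_assoc]

/-- a balanced allocation has the canonical product value -/
private lemma bal_prod {B n : ℕ} (hB : 0 < B) (ν : Fin B → ℕ) (hsum : ∑ b, ν b = n)
    (hbal : ∀ i j, ν i ≤ ν j + 1) :
    ∏ b, ν b = (n / B) ^ (B - n % B) * (n / B + 1) ^ (n % B) := by
  have hne : (univ : Finset (Fin B)).Nonempty := univ_nonempty_iff.mpr (Fin.pos_iff_nonempty.mp hB)
  obtain ⟨i₀, -, hmin⟩ := Finset.exists_min_image univ ν hne
  set m := ν i₀ with hm
  have hub : ∀ b, ν b ≤ m + 1 := fun b => hbal b i₀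
  have hlb : ∀ b, m ≤ ν b := fun b => hmin b (mem_univ b)
  classical
  set S : Finset (Fin B) := univ.filter (fun b => ν b = m + 1) with hS
  set k := S.card with hk
  have hSval : ∀ b ∈ S, ν b = m + 1 := fun b hb => (mem_filter.mp hb).2
  have hScval : ∀ b ∈ univ.filter (fun b => ¬ ν b = m + 1), ν b = m := by
    intro b hb
    have h1 := (mem_filter.mp hb).2
    have := hub b; have := hlb b; omega
  have hcard : (univ.filter (fun b => ¬ ν b = m + 1)).card = B - k := by
    have h := Finset.card_filter_add_card_filter_not
      (s := (univ : Finset (Fin B))) (p := fun b => ν b = m + 1)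
    simp only [Finset.card_univ, Fintype.card_fin] at h
    rw [← hS, ← hk] at h
    omega
  have hkB : k < B := by
    have hi₀ : i₀ ∉ S := by simp [hS, hm]
    have hle : k ≤ B := by
      have := Finset.card_le_card (Finset.filter_subset (fun b => ν b = m + 1) univ)
      simpa using this
    rcases eq_or_lt_of_le hle with h | h
    · exfalso; apply hi₀
      have : S = univ := Finset.eq_univ_of_card S (by simpa using h)
      simp [this]
    · exact h
  obtain ⟨c, hc⟩ := Nat.exists_eq_add_of_le (le_of_lt hkB)
  have hBk : B - k = c := by omega
  have hsum' : n = k * (m + 1) + c * m := by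
    rw [← hsum, ← Finset.sum_filter_add_sum_filter_not univ (fun b => ν b = m + 1)]
    rw [Finset.sum_congr rfl hSval, Finset.sum_congr rfl hScval,
      Finset.sum_const, Finset.sum_const, hcard, hBk, smul_eq_mul, smul_eq_mul]
  have hdm : n / B = m ∧ n % B = k := by
    refine (Nat.div_mod_unique hB (a := n) (c := k) (d := m)).mpr ⟨?_, hkB⟩
    rw [hsum', hc]; ring
  rw [← Finset.prod_filter_mul_prod_filter_not univ (fun b => ν b = m + 1)]
  rw [Finset.prod_congr rfl hSval, Finset.prod_congr rfl hScval,
    Finset.prod_const, Finset.prod_const, hcard, hdm.1, hdm.2]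
  ring

/-- any positive allocation has product at most the canonical value -/
private lemma prod_le_target {B n : ℕ} (hB : 0 < B) :
    ∀ N (ν : Fin B → ℕ), (∑ b, (ν b) ^ 2 ≤ N) → (∀ b, 0 < ν b) → ∑ b, ν b = n →
      ∏ b, ν b ≤ (n / B) ^ (B - n % B) * (n / B + 1) ^ (n % B) := by
  intro N
  induction N using Nat.strong_induction_on with
  | _ N ih =>
    intro ν hsq hpos hsum
    by_cases hbal : ∀ i j, ν i ≤ ν j + 1
    · exact le_of_eq (bal_prod hB ν hsum hbal)
    · push_neg at hbal
      obtain ⟨i, j, hij2⟩ := hbal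
      have hij : i ≠ j := by rintro rfl; omega
      classical
      set ν' : Fin B → ℕ := Function.update (Function.update ν i (ν i - 1)) j (ν j + 1) with hν'
      have hν'i : ν' i = ν i - 1 := by simp [hν', Function.update, hij]
      have hν'j : ν' j = ν j + 1 := by simp [hν', Function.update]
      have hν'o : ∀ b, b ≠ i → b ≠ j → ν' b = ν b := by
        intro b hbi hbj; simp [hν', Function.update, hbi, hbj]
      have hrest1 : ∑ b ∈ (univ.erase i).erase j, ν' b = ∑ b ∈ (univ.erase i).erase j, ν b :=
        Finset.sum_congr rfl (fun b hb =>
          hν'o b (by rintro rfl; simp at hb) (by rintro rfl; simp at hb))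
      have hrest2 : ∑ b ∈ (univ.erase i).erase j, ν' b ^ 2
          = ∑ b ∈ (univ.erase i).erase j, ν b ^ 2 :=
        Finset.sum_congr rfl (fun b hb => by
          rw [hν'o b (by rintro rfl; simp at hb) (by rintro rfl; simp at hb)])
      have hrestp : ∏ b ∈ (univ.erase i).erase j, ν' b = ∏ b ∈ (univ.erase i).erase j, ν b :=
        Finset.prod_congr rfl (fun b hb =>
          hν'o b (by rintro rfl; simp at hb) (by rintro rfl; simp at hb))
      have hpos' : ∀ b, 0 < ν' b := by
        intro b
        by_cases h1 : b = i
        · subst h1; rw [hν'i]; omega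
        by_cases h2 : b = j
        · subst h2; rw [hν'j]; omega
        · rw [hν'o b h1 h2]; exact hpos b
      have hsum' : ∑ b, ν' b = n := by
        rw [sum_split ν' i j hij, hν'i, hν'j, hrest1]
        rw [sum_split ν i j hij] at hsum
        omega
      have hsq' : ∑ b, (ν' b) ^ 2 < N := by
        have h1 : ∑ b, ν' b ^ 2 < ∑ b, ν b ^ 2 := by
          rw [sum_split (fun b => ν' b ^ 2) i j hij, sum_split (fun b => ν b ^ 2) i j hij]
          simp only [hν'i, hν'j, hrest2]
          have hle : (ν i - 1) ^ 2 + (ν j + 1) ^ 2 < ν i ^ 2 + ν j ^ 2 := by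
            nlinarith [Nat.sub_add_cancel (show 1 ≤ ν i by omega)]
          omega
        omega
      have hprod : ∏ b, ν b ≤ ∏ b, ν' b := by
        rw [prod_split ν' i j hij, prod_split ν i j hij, hν'i, hν'j, hrestp]
        have : ν i * ν j ≤ (ν i - 1) * (ν j + 1) := by
          nlinarith [Nat.sub_add_cancel (show 1 ≤ ν i by omega)]
        exact Nat.mul_le_mul_right _ this
      exact le_trans hprod (ih _ hsq' ν' (le_refl _) hpos' hsum')

/-- If an allocation of positive integers summing to `n` minimizes the
squared Euclidean distance `∑ b, (n b − n/B)²` to the continuous optimum `(n/B,…,n/B)`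
among all such allocations, then it also maximizes the product `∏ b, n b`. -/
theorem stmt12 (n B : ℕ) (hB : 0 < B) (hBn : B ≤ n)
    (νh : Fin B → ℕ) (hpos : ∀ b, 0 < νh b) (hsum : ∑ b, νh b = n)
    (hmin : ∀ ν : Fin B → ℕ, (∀ b, 0 < ν b) → ∑ b, ν b = n →
      ∑ b, ((νh b : ℝ) - (n : ℝ) / B) ^ 2 ≤ ∑ b, ((ν b : ℝ) - (n : ℝ) / B) ^ 2) :
    ∀ ν : Fin B → ℕ, (∀ b, 0 < ν b) → ∑ b, ν b = n →
      ∏ b, ν b ≤ ∏ b, νh b := by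
  -- νh is balanced
  have hbal : ∀ i j, νh i ≤ νh j + 1 := by
    by_contra hbal
    push_neg at hbal
    obtain ⟨i, j, hij2⟩ := hbal
    have hij : i ≠ j := by rintro rfl; omega
    classical
    set ν' : Fin B → ℕ := Function.update (Function.update νh i (νh i - 1)) j (νh j + 1) with hν'
    have hν'i : ν' i = νh i - 1 := by simp [hν', Function.update, hij]
    have hν'j : ν' j = νh j + 1 := by simp [hν', Function.update]
    have hν'o : ∀ b, b ≠ i → b ≠ j → ν' b = νh b := by
      intro b hbi hbj; simp [hν', Function.update, hbi, hbj]
    have hpos' : ∀ b, 0 < ν' b := by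
      intro b
      by_cases h1 : b = i
      · subst h1; rw [hν'i]; omega
      by_cases h2 : b = j
      · subst h2; rw [hν'j]; omega
      · rw [hν'o b h1 h2]; exact hpos b
    have hrest1 : ∑ b ∈ (univ.erase i).erase j, ν' b = ∑ b ∈ (univ.erase i).erase j, νh b :=
      Finset.sum_congr rfl (fun b hb =>
        hν'o b (by rintro rfl; simp at hb) (by rintro rfl; simp at hb))
    have hrestR : ∑ b ∈ (univ.erase i).erase j, ((ν' b : ℝ) - (n : ℝ) / B) ^ 2
        = ∑ b ∈ (univ.erase i).erase j, ((νh b : ℝ) - (n : ℝ) / B) ^ 2 :=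
      Finset.sum_congr rfl (fun b hb => by
        rw [hν'o b (by rintro rfl; simp at hb) (by rintro rfl; simp at hb)])
    have hsum' : ∑ b, ν' b = n := by
      rw [sum_split ν' i j hij, hν'i, hν'j, hrest1]
      rw [sum_split νh i j hij] at hsum
      omega
    have hlt : ∑ b, ((ν' b : ℝ) - (n : ℝ) / B) ^ 2 < ∑ b, ((νh b : ℝ) - (n : ℝ) / B) ^ 2 := by
      rw [sum_split (fun b => ((ν' b : ℝ) - (n : ℝ) / B) ^ 2) i j hij,
          sum_split (fun b => ((νh b : ℝ) - (n : ℝ) / B) ^ 2) i j hij]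
      simp only [hν'i, hν'j, hrestR]
      have hcast : ((νh i - 1 : ℕ) : ℝ) = (νh i : ℝ) - 1 := by
        have h1 : 1 ≤ νh i := by omega
        push_cast [h1]; ring
      have hji : (νh j : ℝ) + 2 ≤ (νh i : ℝ) := by exact_mod_cast (by omega : νh j + 2 ≤ νh i)
      rw [hcast]
      push_cast
      nlinarith [hji]
    exact absurd (hmin ν' hpos' hsum') (not_le.mpr hlt)
  intro ν hp hs
  calc ∏ b, ν b ≤ (n / B) ^ (B - n % B) * (n / B + 1) ^ (n % B) :=
        prod_le_target hB (∑ b, (ν b) ^ 2) ν (le_refl _) hp hs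
    _ = ∏ b, νh b := (bal_prod hB νh hsum hbal).symm
end

section
/- Let n, B be positive integers with B ≤ n, and write n = q·B + r by Euclidean division (q ≥ 1, 0 ≤ r < B). If an allocation (n_1,…,n_B) of positive integers with ∑_{b=1}^B n_b = n maximizes the D-optimality criterion ∏_{b=1}^B n_b, then it also minimizes the min-max criterion max_{1≤b≤B} n_b^{−1} among all allocations of positive integers summing to n; that is, every D-optimal allocation is min-max optimal. -/
open Finset

/-- For `B ≤ n` with `n = q·B + r` by Euclidean division, every
allocation of positive integers summing to `n` that maximizes the D-optimality criterion
`∏ b, n b` also minimizes the min-max criterion `max_b (n b)⁻¹` among all such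
allocations. -/
theorem stmt13 (n B q r : ℕ) (hn : 0 < n) (hB : 0 < B) (hBn : B ≤ n)
    (hq : q = n / B) (hr : r = n % B)
    (ν : Fin B → ℕ) (hpos : ∀ b, 0 < ν b) (hsum : ∑ b, ν b = n)
    (hmax : ∀ ν' : Fin B → ℕ, (∀ b, 0 < ν' b) → ∑ b, ν' b = n →
      ∏ b, ν' b ≤ ∏ b, ν b) :
    ∀ ν' : Fin B → ℕ, (∀ b, 0 < ν' b) → ∑ b, ν' b = n →
      (univ.sup' (univ_nonempty_iff.mpr ⟨⟨0, hB⟩⟩) fun b => ((ν b : ℝ))⁻¹) ≤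
        (univ.sup' (univ_nonempty_iff.mpr ⟨⟨0, hB⟩⟩) fun b => ((ν' b : ℝ))⁻¹) := by
  intro ν' hpos' hsum'
  have hqn : q * B + r = n := by rw [hq, hr]; exact Nat.div_add_mod' n B
  have hrB : r < B := by rw [hr]; exact Nat.mod_lt _ hB
  have hq1 : 1 ≤ q := by
    rw [hq]; exact (Nat.one_le_div_iff hB).mpr hBn
  -- Step 1: every D-optimal allocation has all entries ≥ q
  have hlow : ∀ c, q ≤ ν c := by
    by_contra h
    push_neg at h
    obtain ⟨a, ha⟩ := h
    -- there is an index with value ≥ q+1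
    have hex : ∃ b, q + 1 ≤ ν b := by
      by_contra h2
      push_neg at h2
      have hb : ∀ c ∈ univ.erase a, ν c ≤ q := fun c _ => Nat.lt_succ_iff.mp (h2 c)
      have hle := Finset.sum_le_card_nsmul (univ.erase a) ν q hb
      have hcard : (univ.erase a).card = B - 1 := by
        rw [Finset.card_erase_of_mem (mem_univ a), Finset.card_univ, Fintype.card_fin]
      rw [hcard, smul_eq_mul] at hle
      have hle' : ∑ c ∈ univ.erase a, ν c ≤ (B - 1) * q := hle
      have hsplit : ν a + ∑ c ∈ univ.erase a, ν c = n := by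
        rw [Finset.add_sum_erase _ _ (mem_univ a), hsum]
      have hmul : (B - 1) * q + q = q * B := by
        have h1 : B - 1 + 1 = B := Nat.succ_pred_eq_of_pos hB
        calc (B - 1) * q + q = (B - 1 + 1) * q := by ring
          _ = q * B := by rw [h1, Nat.mul_comm]
      have hBq : q * B ≤ n := by omega
      omega
    obtain ⟨b, hb⟩ := hex
    have hab : b ≠ a := by intro h; rw [h] at hb; omega
    -- the perturbed allocation
    set ν'' : Fin B → ℕ := Function.update (Function.update ν a (ν a + 1)) b (ν b - 1) with hν''
    have hv''b : ν'' b = ν b - 1 := by simp [hν'']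
    have hv''a : ν'' a = ν a + 1 := by
      simp [hν'', Function.update_of_ne (Ne.symm hab)]
    have hv''c : ∀ c, c ≠ a → c ≠ b → ν'' c = ν c := by
      intro c hca hcb
      simp [hν'', Function.update_of_ne hcb, Function.update_of_ne hca]
    have hpos'' : ∀ c, 0 < ν'' c := by
      intro c
      by_cases hcb : c = b
      · subst hcb; rw [hv''b]; omega
      · by_cases hca : c = a
        · subst hca; rw [hv''a]; omega
        · rw [hv''c c hca hcb]; exact hpos c
    have haeb : a ∈ univ.erase b := Finset.mem_erase.mpr ⟨Ne.symm hab, mem_univ a⟩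
    -- decompositions
    have hdecS : ∀ f : Fin B → ℕ,
        ∑ c, f c = f b + (f a + ∑ c ∈ (univ.erase b).erase a, f c) := by
      intro f
      rw [← Finset.add_sum_erase _ f (mem_univ b), ← Finset.add_sum_erase _ f haeb]
    have hdecP : ∀ f : Fin B → ℕ,
        ∏ c, f c = f b * (f a * ∏ c ∈ (univ.erase b).erase a, f c) := by
      intro f
      rw [← Finset.mul_prod_erase _ f (mem_univ b), ← Finset.mul_prod_erase _ f haeb]
    have hcong : ∑ c ∈ (univ.erase b).erase a, ν'' c = ∑ c ∈ (univ.erase b).erase a, ν c := by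
      apply Finset.sum_congr rfl
      intro c hc
      simp only [Finset.mem_erase] at hc
      exact hv''c c hc.1 hc.2.1
    have hcongP : ∏ c ∈ (univ.erase b).erase a, ν'' c = ∏ c ∈ (univ.erase b).erase a, ν c := by
      apply Finset.prod_congr rfl
      intro c hc
      simp only [Finset.mem_erase] at hc
      exact hv''c c hc.1 hc.2.1
    have hsum'' : ∑ c, ν'' c = n := by
      rw [hdecS ν'', hv''a, hv''b, hcong]
      have := hdecS ν
      omega
    have hle := hmax ν'' hpos'' hsum''
    rw [hdecP ν'', hdecP ν, hv''a, hv''b, hcongP] at hle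
    set P := ∏ c ∈ (univ.erase b).erase a, ν c with hP
    have hPpos : 0 < P := Finset.prod_pos (fun c _ => hpos c)
    obtain ⟨m, hm⟩ : ∃ m, ν b = m + 1 := ⟨ν b - 1, (Nat.succ_pred_eq_of_pos (hpos b)).symm⟩
    rw [hm] at hle hb
    simp only [Nat.add_sub_cancel] at hle
    -- hle : m * ((ν a + 1) * P) ≤ (m+1) * (ν a * P), but m ≥ ν a + 1
    have hma : ν a + 1 ≤ m := by omega
    nlinarith [hle, hPpos, hma]
  -- Step 2: some entry of ν' is ≤ q
  have hex' : ∃ b₀, ν' b₀ ≤ q := by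
    by_contra h
    push_neg at h
    have hb : ∀ c ∈ (univ : Finset (Fin B)), q + 1 ≤ ν' c := fun c _ => h c
    have hle := Finset.card_nsmul_le_sum univ ν' (q + 1) hb
    rw [Finset.card_univ, Fintype.card_fin, smul_eq_mul, hsum'] at hle
    -- B * (q+1) ≤ n = q*B + r, r < B : contradiction
    have : B * (q + 1) = q * B + B := by ring
    omega
  obtain ⟨b₀, hb₀⟩ := hex'
  -- Step 3: conclude
  have hq0 : (0 : ℝ) < (q : ℝ) := by exact_mod_cast hq1
  apply Finset.sup'_le
  intro c _
  have h1 : ((ν c : ℝ))⁻¹ ≤ ((q : ℝ))⁻¹ := by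
    apply inv_anti₀ hq0
    exact_mod_cast hlow c
  have h2 : ((q : ℝ))⁻¹ ≤ ((ν' b₀ : ℝ))⁻¹ := by
    apply inv_anti₀
    · exact_mod_cast hpos' b₀
    · exact_mod_cast hb₀
  exact le_trans h1 (le_trans h2 (Finset.le_sup' (fun b => ((ν' b : ℝ))⁻¹) (mem_univ b₀)))
end

section
/- Let n, B be positive integers with B ≤ n, write n = q·B + r by Euclidean division (q ≥ 1), and assume 2 ≤ r < B (so in particular B ≥ 3). Then there exists an allocation (n_1,…,n_B) of positive integers with ∑_{b=1}^B n_b = n such that min_b n_b = q (hence the allocation attains the optimal min-max value max_b n_b^{−1} = q^{−1}) but ∏_{b=1}^B n_b < q^{B−r}·(q+1)^r, i.e., the allocation is min-max optimal without being D-optimal. Hence min-max optimality does not imply D-optimality. -/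
/-!
Give every block `q` units and put the whole remainder `r` on a single block. The minimum stays
`q`, while the product becomes `(q + r) q^(B-1)`. Compared with `q^(B-r) (q+1)^r` this is the
inequality `q^(r-1) (q + r) < (q+1)^r`: the left side is the sum of the two leading terms of the
binomial expansion of the right side, and for `r ≥ 2` the expansion has further positive terms.
-/

open Finset

theorem pow_pred_mul_add_lt_add_one_pow (q : ℕ) {r : ℕ} (hr : 2 ≤ r) :
    q ^ (r - 1) * (q + r) < (q + 1) ^ r := by
  induction r, hr using Nat.le_induction with
  | base => ring_nf; omega
  | succ r hr ih =>
    obtain ⟨k, rfl⟩ : ∃ k, r = k + 1 := ⟨r - 1, by omega⟩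
    simp only [Nat.add_sub_cancel] at ih ⊢
    calc q ^ (k + 1) * (q + (k + 1 + 1)) ≤ (q + 1) * (q ^ k * (q + (k + 1))) := by
          rw [pow_succ]; nlinarith [Nat.zero_le (q ^ k)]
      _ < (q + 1) * (q + 1) ^ (k + 1) := by gcongr
      _ = (q + 1) ^ (k + 1 + 1) := (pow_succ' _ _).symm

theorem sup'_inv_eq_inv_of_le_of_exists_eq {ι : Type*} [Fintype ι]
    (hι : (univ : Finset ι).Nonempty) {f : ι → ℕ} {q : ℕ} (hq : 0 < q)
    (hle : ∀ i, q ≤ f i) (hmin : ∃ i, f i = q) :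
    univ.sup' hι (fun i => ((f i : ℝ))⁻¹) = (q : ℝ)⁻¹ := by
  obtain ⟨i₀, hi₀⟩ := hmin
  apply le_antisymm
  · exact sup'_le _ _ fun i _ => inv_anti₀ (by exact_mod_cast hq) (by exact_mod_cast hle i)
  · exact le_sup'_of_le _ (mem_univ i₀) (by rw [hi₀])

section LumpAllocation

variable {ι : Type*} [DecidableEq ι]

def lumpAllocation (q r : ℕ) (a : ι) : ι → ℕ :=
  Function.update (fun _ => q) a (q + r)

theorem lumpAllocation_sum [Fintype ι] (q r : ℕ) (a : ι) :
    ∑ i, lumpAllocation q r a i = Fintype.card ι * q + r := by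
  have hcard : 0 < Fintype.card ι := Fintype.card_pos_iff.mpr ⟨a⟩
  rw [lumpAllocation, sum_update_of_mem (mem_univ a), sum_const, card_sdiff]
  simp only [card_univ, inter_univ, card_singleton, smul_eq_mul]
  obtain ⟨c, hc⟩ : ∃ c, Fintype.card ι = c + 1 := ⟨_, (Nat.succ_pred_eq_of_pos hcard).symm⟩
  rw [hc, Nat.add_sub_cancel]
  ring

theorem lumpAllocation_prod [Fintype ι] (q r : ℕ) (a : ι) :
    ∏ i, lumpAllocation q r a i = (q + r) * q ^ (Fintype.card ι - 1) := by
  rw [lumpAllocation, prod_update_of_mem (mem_univ a), prod_const, card_sdiff]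
  simp

theorem le_lumpAllocation (q r : ℕ) (a i : ι) : q ≤ lumpAllocation q r a i := by
  unfold lumpAllocation
  rcases eq_or_ne i a with rfl | h <;> simp [*]

theorem lumpAllocation_of_ne (q r : ℕ) {a i : ι} (h : i ≠ a) : lumpAllocation q r a i = q :=
  Function.update_of_ne h _ _

end LumpAllocation

theorem stmt15_general (n B q r : ℕ) (hB : 0 < B) (hBn : B ≤ n)
    (hq : q = n / B) (hr : r = n % B) (hr2 : 2 ≤ r) :
    ∃ ν : Fin B → ℕ, (∀ b, 0 < ν b) ∧ ∑ b, ν b = n ∧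
      (∀ b, q ≤ ν b) ∧ (∃ b, ν b = q) ∧
      ((univ.sup' (univ_nonempty_iff.mpr ⟨⟨0, hB⟩⟩) fun b => ((ν b : ℝ))⁻¹) = ((q : ℝ))⁻¹) ∧
      ∏ b, ν b < q ^ (B - r) * (q + 1) ^ r := by
  have hrB : r < B := hr ▸ Nat.mod_lt n hB
  have hq_pos : 0 < q := hq ▸ Nat.div_pos hBn hB
  have hmin : ∃ b, lumpAllocation q r (⟨0, hB⟩ : Fin B) b = q :=
    ⟨⟨1, by omega⟩, lumpAllocation_of_ne q r (by simp)⟩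
  refine ⟨lumpAllocation q r ⟨0, hB⟩, fun b => hq_pos.trans_le (le_lumpAllocation q r _ b),
    ?_, le_lumpAllocation q r _, hmin,
    sup'_inv_eq_inv_of_le_of_exists_eq _ hq_pos (le_lumpAllocation q r _) hmin, ?_⟩
  · rw [lumpAllocation_sum, Fintype.card_fin, hq, hr, Nat.div_add_mod]
  · rw [lumpAllocation_prod, Fintype.card_fin]
    calc (q + r) * q ^ (B - 1) = q ^ (B - r) * (q ^ (r - 1) * (q + r)) := by
          rw [show B - 1 = (B - r) + (r - 1) by omega, pow_add]; ring
      _ < q ^ (B - r) * (q + 1) ^ r := by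
          gcongr
          exact pow_pred_mul_add_lt_add_one_pow q hr2

/-- For `B ≤ n` with `n = q·B + r` by Euclidean division and `2 ≤ r < B`,
there exists an allocation of positive integers summing to `n` with minimum entry `q`
(hence attaining the optimal min-max value `max_b (n b)⁻¹ = q⁻¹`) whose product
`∏ b, n b` is strictly below the D-optimal value `q^(B-r) · (q+1)^r`: min-max optimality
does not imply D-optimality. -/
theorem stmt15 (n B q r : ℕ) (hn : 0 < n) (hB : 0 < B) (hBn : B ≤ n)
    (hq : q = n / B) (hr : r = n % B) (hr2 : 2 ≤ r) :
    ∃ ν : Fin B → ℕ, (∀ b, 0 < ν b) ∧ ∑ b, ν b = n ∧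
      (∀ b, q ≤ ν b) ∧ (∃ b, ν b = q) ∧
      ((univ.sup' (univ_nonempty_iff.mpr ⟨⟨0, hB⟩⟩) fun b => ((ν b : ℝ))⁻¹) = ((q : ℝ))⁻¹) ∧
      ∏ b, ν b < q ^ (B - r) * (q + 1) ^ r :=
  stmt15_general n B q r hB hBn hq hr hr2
end

section
/- Let n, B be positive integers with B ≤ n, and write n = q·B + r by Euclidean division (q ≥ 1, 0 ≤ r < B). Over all allocations (n_1,…,n_B) of positive integers with ∑_{b=1}^B n_b = n, the A-optimality criterion ∑_{b=1}^B n_b^{−1} is minimized exactly by the allocations in which B−r entries equal q and r entries equal q+1, with minimum value (B−r)/q + r/(q+1). Consequently the minimizers of ∑_b n_b^{−1} coincide exactly with the maximizers of ∏_b n_b: D-optimality and A-optimality are equivalent in the tree regression setting. -/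
open Finset

/-!
For a strictly convex `f`, the chord of `f` through the consecutive integers `q` and `q + 1`
lies below `f` at every other integer, touching it only at `q` and `q + 1`. Summing this chord
bound over an allocation with `∑ ν = B q + r` gives `∑ f (ν b) ≥ (B - r) f q + r f (q + 1)`,
with equality exactly when every `ν b` lies in `{q, q + 1}`. Taking `f x = x⁻¹` gives the
A-optimality claim, and `f = -log` shows that the same allocations are the ones with
`∏ ν = q ^ (B - r) (q + 1) ^ r`.
-/

namespace StrictConvexOn

variable {s : Set ℝ} {f : ℝ → ℝ} {a x : ℝ}

theorem add_mul_sub_lt (hf : StrictConvexOn ℝ s f) (ha : a ∈ s) (ha' : a + 1 ∈ s)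
    (hx : x ∈ s) (hxa : x < a ∨ a + 1 < x) : f a + (x - a) * (f (a + 1) - f a) < f x := by
  rcases hxa with hxa | hxa
  · have h := hf.secant_strict_mono ha hx ha' hxa.ne (by linarith) (by linarith)
    rw [add_sub_cancel_left, div_one, div_lt_iff_of_neg (by linarith)] at h
    linarith
  · have h := hf.secant_strict_mono ha ha' hx (by linarith) (by linarith) hxa
    rw [add_sub_cancel_left, div_one, lt_div_iff₀ (by linarith)] at h
    linarith

theorem add_mul_sub_eq_iff (hf : StrictConvexOn ℝ s f) (ha : a ∈ s) (ha' : a + 1 ∈ s)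
    (hx : x ∈ s) (hxa : x ≤ a ∨ a + 1 ≤ x) :
    f a + (x - a) * (f (a + 1) - f a) = f x ↔ x = a ∨ x = a + 1 := by
  refine ⟨fun h => ?_, ?_⟩
  · by_contra hne
    refine (hf.add_mul_sub_lt ha ha' hx ?_).ne h
    rcases hxa with hxa | hxa
    · exact .inl (hxa.lt_of_ne (hne <| .inl ·))
    · exact .inr (hxa.lt_of_ne (hne <| .inr <| Eq.symm ·))
  · rintro (rfl | rfl) <;> ring

theorem add_mul_sub_le (hf : StrictConvexOn ℝ s f) (ha : a ∈ s) (ha' : a + 1 ∈ s)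
    (hx : x ∈ s) (hxa : x ≤ a ∨ a + 1 ≤ x) : f a + (x - a) * (f (a + 1) - f a) ≤ f x := by
  by_cases hx' : x = a ∨ x = a + 1
  · exact ((hf.add_mul_sub_eq_iff ha ha' hx hxa).2 hx').le
  · refine (hf.add_mul_sub_lt ha ha' hx ?_).le
    rw [not_or] at hx'
    rcases hxa with hxa | hxa
    · exact .inl (hxa.lt_of_ne hx'.1)
    · exact .inr (hxa.lt_of_ne (Ne.symm hx'.2))

end StrictConvexOn

theorem natCast_le_or_add_one_le (m q : ℕ) : (m : ℝ) ≤ q ∨ (q : ℝ) + 1 ≤ m := by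
  rcases le_or_gt m q with h | h
  · exact .inl (by exact_mod_cast h)
  · exact .inr (by exact_mod_cast h)

section Allocation

variable {ι : Type*} [Fintype ι] {ν : ι → ℕ} {q r : ℕ}

theorem sum_add_mul_sub_eq (c d : ℝ) (hsum : ∑ i, ν i = Fintype.card ι * q + r) :
    ∑ i, (c + ((ν i : ℝ) - q) * d) = (Fintype.card ι - r) * c + r * (c + d) := by
  have hsumℝ : ∑ i, (ν i : ℝ) = Fintype.card ι * q + r := by exact_mod_cast hsum
  simp only [sum_add_distrib, ← sum_mul, sum_sub_distrib, hsumℝ, sum_const, card_univ,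
    nsmul_eq_mul]
  ring

namespace StrictConvexOn

variable {f : ℝ → ℝ}

theorem natCast_add_mul_sub_le (hf : StrictConvexOn ℝ (Set.Ioi 0) f) {q m : ℕ} (hq : 0 < q)
    (hm : 0 < m) : f q + ((m : ℝ) - q) * (f (q + 1) - f q) ≤ f m :=
  hf.add_mul_sub_le (Set.mem_Ioi.2 (Nat.cast_pos.2 hq)) (Set.mem_Ioi.2 (by positivity))
    (Set.mem_Ioi.2 (Nat.cast_pos.2 hm)) (natCast_le_or_add_one_le m q)

theorem natCast_add_mul_sub_eq_iff (hf : StrictConvexOn ℝ (Set.Ioi 0) f) {q m : ℕ}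
    (hq : 0 < q) (hm : 0 < m) :
    f q + ((m : ℝ) - q) * (f (q + 1) - f q) = f m ↔ m = q ∨ m = q + 1 := by
  rw [hf.add_mul_sub_eq_iff (Set.mem_Ioi.2 (Nat.cast_pos.2 hq)) (Set.mem_Ioi.2 (by positivity))
    (Set.mem_Ioi.2 (Nat.cast_pos.2 hm)) (natCast_le_or_add_one_le m q)]
  norm_cast

theorem card_sub_mul_add_mul_le_sum (hf : StrictConvexOn ℝ (Set.Ioi 0) f) (hq : 0 < q)
    (hν : ∀ i, 0 < ν i) (hsum : ∑ i, ν i = Fintype.card ι * q + r) :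
    (Fintype.card ι - r) * f q + r * f (q + 1) ≤ ∑ i, f (ν i) := by
  calc (Fintype.card ι - r) * f q + r * f (q + 1)
      = ∑ i, (f q + ((ν i : ℝ) - q) * (f (q + 1) - f q)) := by
        rw [sum_add_mul_sub_eq _ _ hsum, add_sub_cancel]
    _ ≤ ∑ i, f (ν i) := sum_le_sum fun i _ => hf.natCast_add_mul_sub_le hq (hν i)

theorem sum_eq_card_sub_mul_add_mul_iff (hf : StrictConvexOn ℝ (Set.Ioi 0) f) (hq : 0 < q)
    (hν : ∀ i, 0 < ν i) (hsum : ∑ i, ν i = Fintype.card ι * q + r) :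
    ∑ i, f (ν i) = (Fintype.card ι - r) * f q + r * f (q + 1) ↔
      ∀ i, ν i = q ∨ ν i = q + 1 := by
  rw [← add_sub_cancel (f q) (f (q + 1)), ← sum_add_mul_sub_eq _ _ hsum, eq_comm,
    sum_eq_sum_iff_of_le fun i _ => hf.natCast_add_mul_sub_le hq (hν i)]
  simp only [mem_univ, true_implies, hf.natCast_add_mul_sub_eq_iff hq (hν _)]

end StrictConvexOn

theorem forall_eq_or_eq_add_one_iff_card_filter (hsum : ∑ i, ν i = Fintype.card ι * q + r) :
    (∀ i, ν i = q ∨ ν i = q + 1) ↔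
      #{i | ν i = q} = Fintype.card ι - r ∧ #{i | ν i = q + 1} = r := by
  classical
  have hcover : (∀ i, ν i = q ∨ ν i = q + 1) ↔
      #{i | ν i = q} + #{i | ν i = q + 1} = Fintype.card ι := by
    rw [← card_union_of_disjoint (disjoint_filter.2 fun _ _ h => by omega), ← filter_or,
      ← card_univ, card_filter_eq_iff]
    simp only [mem_univ, true_implies]
  refine ⟨fun h => ?_, fun ⟨hq, hr⟩ => hcover.2 ?_⟩
  · have hsum' : ∑ i, ν i = Fintype.card ι * q + #{i | ν i = q + 1} := by
      rw [card_filter, ← smul_eq_mul, ← card_univ, ← sum_const, ← sum_add_distrib]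
      refine sum_congr rfl fun i _ => ?_
      rcases h i with h | h <;> simp [h]
    have := hcover.1 h
    omega
  · have := card_filter_le univ fun i => ν i = q + 1
    rw [card_univ] at this
    omega

theorem prod_eq_pow_mul_pow_iff (hq : 0 < q) (hr : r ≤ Fintype.card ι) (hν : ∀ i, 0 < ν i)
    (hsum : ∑ i, ν i = Fintype.card ι * q + r) :
    ∏ i, ν i = q ^ (Fintype.card ι - r) * (q + 1) ^ r ↔ ∀ i, ν i = q ∨ ν i = q + 1 := by
  rw [← strictConcaveOn_log_Ioi.neg.sum_eq_card_sub_mul_add_mul_iff hq hν hsum]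
  have hνpos : ∀ i, (0 : ℝ) < ν i := fun i => Nat.cast_pos.2 (hν i)
  have hqpos : (0 : ℝ) < q := Nat.cast_pos.2 hq
  rw [← Nat.cast_inj (R := ℝ), ← Real.log_injOn_pos.eq_iff
    (Set.mem_Ioi.2 (by push_cast; exact prod_pos fun i _ => hνpos i))
    (Set.mem_Ioi.2 (by positivity))]
  push_cast
  rw [Real.log_prod fun i _ => (hνpos i).ne', Real.log_mul (by positivity) (by positivity),
    Real.log_pow, Real.log_pow, Nat.cast_sub hr]
  simp only [Pi.neg_apply, sum_neg_distrib]
  rw [mul_neg, mul_neg, ← neg_add, neg_inj]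

end Allocation

theorem stmt16_general (n B q r : ℕ) (hB : 0 < B) (hBn : B ≤ n)
    (hq : q = n / B) (hr : r = n % B) :
    (∀ ν : Fin B → ℕ, (∀ b, 0 < ν b) → ∑ b, ν b = n →
      ((B : ℝ) - r) / q + (r : ℝ) / (q + 1) ≤ ∑ b, ((ν b : ℝ))⁻¹) ∧
    (∀ ν : Fin B → ℕ, (∀ b, 0 < ν b) → ∑ b, ν b = n →
      (∑ b, ((ν b : ℝ))⁻¹ = ((B : ℝ) - r) / q + (r : ℝ) / (q + 1) ↔
        ((univ.filter fun b => ν b = q).card = B - r ∧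
          (univ.filter fun b => ν b = q + 1).card = r))) ∧
    (∀ ν : Fin B → ℕ, (∀ b, 0 < ν b) → ∑ b, ν b = n →
      (∑ b, ((ν b : ℝ))⁻¹ = ((B : ℝ) - r) / q + (r : ℝ) / (q + 1) ↔
        ∏ b, ν b = q ^ (B - r) * (q + 1) ^ r)) := by
  have hq0 : 0 < q := hq ▸ Nat.div_pos hBn hB
  have hrB : r ≤ Fintype.card (Fin B) := by
    rw [Fintype.card_fin, hr]
    exact (Nat.mod_lt n hB).le
  have hinv : StrictConvexOn ℝ (Set.Ioi 0) fun x : ℝ => x⁻¹ := by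
    simpa only [zpow_neg_one] using strictConvexOn_zpow (m := -1) (by norm_num) (by norm_num)
  have htarget : ((B : ℝ) - r) / q + (r : ℝ) / (q + 1) =
      (Fintype.card (Fin B) - r) * (q : ℝ)⁻¹ + r * ((q : ℝ) + 1)⁻¹ := by
    simp only [Fintype.card_fin, div_eq_mul_inv]
  have hsum : ∀ ν : Fin B → ℕ, ∑ b, ν b = n →
      ∑ b, ν b = Fintype.card (Fin B) * q + r := by
    rintro ν rfl
    rw [Fintype.card_fin, hq, hr, Nat.div_add_mod]
  refine ⟨fun ν hν hn => ?_, fun ν hν hn => ?_, fun ν hν hn => ?_⟩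
  · exact htarget ▸ hinv.card_sub_mul_add_mul_le_sum hq0 hν (hsum ν hn)
  · rw [htarget, hinv.sum_eq_card_sub_mul_add_mul_iff hq0 hν (hsum ν hn),
      forall_eq_or_eq_add_one_iff_card_filter (hsum ν hn), Fintype.card_fin]
  · rw [htarget, hinv.sum_eq_card_sub_mul_add_mul_iff hq0 hν (hsum ν hn),
      ← prod_eq_pow_mul_pow_iff hq0 hrB hν (hsum ν hn), Fintype.card_fin]

/-- For `B ≤ n` with `n = q·B + r` by Euclidean division, over all
allocations of positive integers summing to `n`, the A-optimality criterion `∑ b, (n b)⁻¹`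
is at least `(B-r)/q + r/(q+1)`, with equality exactly for the allocations with `B - r`
entries equal to `q` and `r` entries equal to `q + 1`; these are exactly the maximizers of
`∏ b, n b`, so D-optimality and A-optimality are equivalent. -/
theorem stmt16 (n B q r : ℕ) (hn : 0 < n) (hB : 0 < B) (hBn : B ≤ n)
    (hq : q = n / B) (hr : r = n % B) :
    (∀ ν : Fin B → ℕ, (∀ b, 0 < ν b) → ∑ b, ν b = n →
      ((B : ℝ) - r) / q + (r : ℝ) / (q + 1) ≤ ∑ b, ((ν b : ℝ))⁻¹) ∧
    (∀ ν : Fin B → ℕ, (∀ b, 0 < ν b) → ∑ b, ν b = n →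
      (∑ b, ((ν b : ℝ))⁻¹ = ((B : ℝ) - r) / q + (r : ℝ) / (q + 1) ↔
        ((univ.filter fun b => ν b = q).card = B - r ∧
          (univ.filter fun b => ν b = q + 1).card = r))) ∧
    (∀ ν : Fin B → ℕ, (∀ b, 0 < ν b) → ∑ b, ν b = n →
      (∑ b, ((ν b : ℝ))⁻¹ = ((B : ℝ) - r) / q + (r : ℝ) / (q + 1) ↔
        ∏ b, ν b = q ^ (B - r) * (q + 1) ^ r)) :=
  stmt16_general n B q r hB hBn hq hr
end

section
/- Let ω be a real number with 0 ≤ ω < 1. Then the sequence n! / n^{⌊n^ω⌋} tends to +∞ as n → ∞; that is, when the number of tree leaves grows like B(n) = n^ω with 0 ≤ ω < 1, the factor n!/n^{B(n)} appearing in the expected D-optimality criterion diverges to infinity. -/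
open Filter Nat

/-! Once `4 b ≤ n`, each of the top `2 b` factors of `n!` is at least `n/2 + 1`, and
`(n/2 + 1)^2 ≥ n`, so these factors alone outweigh `n^b`; what is left of `n!` is
`(n - 2 b)! ≥ n - 2 b ≥ n/2`. Since `n^ω = o(n)`, `b = ⌊n^ω⌋` satisfies `4 b ≤ n` eventually. -/

namespace Nat

theorem pow_le_descFactorial_two_mul {n b : ℕ} (h : 4 * b ≤ n) :
    n ^ b ≤ n.descFactorial (2 * b) := by
  have hsq : n ≤ (n + 1 - 2 * b) ^ 2 := by
    have : n + 2 ≤ 2 * (n + 1 - 2 * b) := by omega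
    nlinarith
  calc n ^ b ≤ ((n + 1 - 2 * b) ^ 2) ^ b := Nat.pow_le_pow_left hsq b
    _ = (n + 1 - 2 * b) ^ (2 * b) := by rw [← pow_mul]
    _ ≤ n.descFactorial (2 * b) := pow_sub_le_descFactorial n (2 * b)

theorem factorial_sub_two_mul_mul_pow_le_factorial {n b : ℕ} (h : 4 * b ≤ n) :
    (n - 2 * b)! * n ^ b ≤ n ! := by
  calc (n - 2 * b)! * n ^ b ≤ (n - 2 * b)! * n.descFactorial (2 * b) :=
        Nat.mul_le_mul_left _ (pow_le_descFactorial_two_mul h)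
    _ = n ! := factorial_mul_descFactorial (by omega)

end Nat

theorem half_le_factorial_div_pow {n b : ℕ} (h : 4 * b ≤ n) :
    (n : ℝ) / 2 ≤ (n ! : ℝ) / (n : ℝ) ^ b := by
  rcases n.eq_zero_or_pos with rfl | hn
  · simp
  have hsub : (n : ℝ) / 2 ≤ ((n - 2 * b : ℕ) : ℝ) := by
    rw [Nat.cast_sub (by omega)]
    push_cast
    have : (4 * b : ℝ) ≤ n := by exact_mod_cast h
    linarith
  rw [le_div_iff₀ (by positivity)]
  calc (n : ℝ) / 2 * (n : ℝ) ^ b ≤ ((n - 2 * b)! : ℝ) * (n : ℝ) ^ b := by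
        gcongr
        exact hsub.trans (by exact_mod_cast Nat.self_le_factorial _)
    _ ≤ n ! := by exact_mod_cast Nat.factorial_sub_two_mul_mul_pow_le_factorial h

theorem eventually_const_mul_rpow_le_self {ω : ℝ} (hω : ω < 1) (c : ℝ) :
    ∀ᶠ x : ℝ in atTop, c * x ^ ω ≤ x := by
  filter_upwards [(tendsto_rpow_atTop (sub_pos.2 hω)).eventually_ge_atTop c,
    eventually_gt_atTop 0] with x hc hx
  calc c * x ^ ω ≤ x ^ (1 - ω) * x ^ ω := by gcongr
    _ = x := by rw [← Real.rpow_add hx]; simp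

theorem stmt18_general (ω : ℝ) (hω1 : ω < 1) :
    Tendsto (fun n : ℕ => (n.factorial : ℝ) / (n : ℝ) ^ ⌊(n : ℝ) ^ ω⌋₊) atTop atTop := by
  have hsmall : ∀ᶠ n : ℕ in atTop, 4 * ⌊(n : ℝ) ^ ω⌋₊ ≤ n := by
    filter_upwards [tendsto_natCast_atTop_atTop.eventually
      (eventually_const_mul_rpow_le_self hω1 4)] with n hn
    have hfloor : (⌊(n : ℝ) ^ ω⌋₊ : ℝ) ≤ (n : ℝ) ^ ω := Nat.floor_le (by positivity)
    exact_mod_cast (by linarith : (4 * ⌊(n : ℝ) ^ ω⌋₊ : ℝ) ≤ n)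
  refine tendsto_atTop_mono' atTop ?_
    (tendsto_natCast_atTop_atTop.atTop_div_const (by norm_num : (0 : ℝ) < 2))
  filter_upwards [hsmall] with n hn
  exact half_le_factorial_div_pow hn

/-- For `0 ≤ ω < 1`, the sequence `n! / n ^ ⌊n^ω⌋` tends to `+∞`:
when the number of leaves grows like `B(n) = n^ω` with `ω < 1`, the factor `n!/n^{B(n)}`
in the expected D-optimality criterion diverges. -/
theorem stmt18 (ω : ℝ) (hω0 : 0 ≤ ω) (hω1 : ω < 1) :
    Tendsto (fun n : ℕ => (n.factorial : ℝ) / (n : ℝ) ^ ⌊(n : ℝ) ^ ω⌋₊) atTop atTop :=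
  stmt18_general ω hω1
end
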